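/- Let r ≥ 1, let α_1 ≤ ... ≤ α_r and β_1 ≤ ... ≤ β_{r+1} be positive real numbers such that α_i ≥ β_{i+1} for all i = 1, ..., r, and Σ_{i=1}^r α_i = Σ_{i=1}^{r+1} β_i. Then Σ_{i=1}^{r+1} β_i² ≤ Σ_{i=1}^r α_i². -/

import Mathlib

/-!
Equal sums make the smallest `β` the total gap `β₀ = ∑ i, (α i - β (i + 1))`, a sum of nonnegative
terms by interlacing. Since `β₀ ≤ β (i + 1) ≤ α i + β (i + 1)`,
`β₀ ^ 2 = ∑ (α i - β (i + 1)) * β₀ ≤ ∑ (α i - β (i + 1)) * (α i + β (i + 1))`,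
and the right-hand side is `∑ (α i ^ 2 - β (i + 1) ^ 2)`.
-/

open Finset

section

variable {R : Type*} [CommRing R] [LinearOrder R] [IsStrictOrderedRing R]

theorem sub_mul_le_sq_sub_sq {a b c : R} (hba : b ≤ a) (hc : c ≤ a + b) :
    (a - b) * c ≤ a ^ 2 - b ^ 2 :=
  calc (a - b) * c ≤ (a - b) * (a + b) := mul_le_mul_of_nonneg_left hc (sub_nonneg.2 hba)
    _ = a ^ 2 - b ^ 2 := by ring

theorem sq_add_sum_sq_le_sum_sq_of_sum_sub_eq {ι : Type*} (s : Finset ι) (a b : ι → R) {c : R}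
    (hc : 0 ≤ c) (hcb : ∀ i ∈ s, c ≤ b i) (hba : ∀ i ∈ s, b i ≤ a i)
    (hsum : ∑ i ∈ s, (a i - b i) = c) :
    c ^ 2 + ∑ i ∈ s, b i ^ 2 ≤ ∑ i ∈ s, a i ^ 2 := by
  have hsq : c ^ 2 ≤ ∑ i ∈ s, (a i ^ 2 - b i ^ 2) :=
    calc c ^ 2 = ∑ i ∈ s, (a i - b i) * c := by rw [← sum_mul, hsum, sq]
      _ ≤ ∑ i ∈ s, (a i ^ 2 - b i ^ 2) := sum_le_sum fun i hi =>
        sub_mul_le_sq_sub_sq (hba i hi) (by linarith [hcb i hi, hba i hi])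
  rw [sum_sub_distrib] at hsq
  linarith

end

theorem interlacing_quadratic_sums_general (r : ℕ)
    (α : Fin r → ℝ) (β : Fin (r + 1) → ℝ)
    (hβmono : Monotone β)
    (hβpos : ∀ i, 0 < β i)
    (hinter : ∀ i : Fin r, β i.succ ≤ α i)
    (hsum : ∑ i, α i = ∑ i, β i) :
    ∑ i, (β i) ^ 2 ≤ ∑ i, (α i) ^ 2 := by
  have hgap : ∑ i, (α i - β i.succ) = β 0 := by
    rw [sum_sub_distrib, hsum, Fin.sum_univ_succ]
    ring
  rw [Fin.sum_univ_succ]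
  exact sq_add_sum_sq_le_sum_sq_of_sum_sub_eq univ α (fun i => β i.succ) (hβpos 0).le
    (fun i _ => hβmono (Fin.zero_le _)) (fun i _ => hinter i) hgap

/-- Lemma 2.4 (interlacing lemma): for positive increasing sequences
`α_1 ≤ … ≤ α_r` and `β_1 ≤ … ≤ β_{r+1}` with `α_i ≥ β_{i+1}` and equal sums,
the quadratic sum of the β's is at most that of the α's. -/
theorem interlacing_quadratic_sums (r : ℕ) (hr : 1 ≤ r)
    (α : Fin r → ℝ) (β : Fin (r + 1) → ℝ)
    (hαmono : Monotone α) (hβmono : Monotone β)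
    (hαpos : ∀ i, 0 < α i) (hβpos : ∀ i, 0 < β i)
    (hinter : ∀ i : Fin r, β i.succ ≤ α i)
    (hsum : ∑ i, α i = ∑ i, β i) :
    ∑ i, (β i) ^ 2 ≤ ∑ i, (α i) ^ 2 :=
  interlacing_quadratic_sums_general r α β hβmono hβpos hinter hsum
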